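/- For every real number x ≥ 1, I0(x) > (4√2/(5π)) · e^x / √x. -/

import Mathlib

open Real Finset intervalIntegral Filter

/-- The modified Bessel function of the first kind of order `0`:
`I₀(x) = ∑_{m≥0} (1/(m!)²) (x/2)^{2m}`. -/
noncomputable def I0 (x : ℝ) : ℝ :=
  ∑' m : ℕ, (1 / ((Nat.factorial m : ℝ)) ^ 2) * (x / 2) ^ (2 * m)

lemma cos_int_odd (m : ℕ) : ∫ θ in (0:ℝ)..π, Real.cos θ ^ (2*m+1) = 0 := by
  induction m with
  | zero => simpa using integral_cos
  | succ k ih =>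
    have h : 2*(k+1)+1 = 2*k+1+2 := by ring
    rw [h, integral_cos_pow]
    simp [ih, Real.sin_pi]

lemma cos_int_even (m : ℕ) :
    ∫ θ in (0:ℝ)..π, Real.cos θ ^ (2*m) =
      π * ((Nat.factorial (2*m) : ℝ) / ((Nat.factorial m : ℝ)^2 * 4^m)) := by
  induction m with
  | zero => simp
  | succ k ih =>
    have h : 2*(k+1) = 2*k+2 := by ring
    rw [h, integral_cos_pow, ih]
    simp only [Real.sin_pi, Real.sin_zero, mul_zero, zero_mul, sub_zero, zero_div, zero_add]
    have h1 : (Nat.factorial (2*k+2) : ℝ) = (2*k+2) * ((2*k+1) * Nat.factorial (2*k)) := by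
      rw [show 2*k+2 = (2*k+1)+1 from rfl, Nat.factorial_succ, Nat.factorial_succ]
      push_cast; ring
    have h2 : (Nat.factorial (k+1) : ℝ) = (k+1) * Nat.factorial k := by
      rw [Nat.factorial_succ]; push_cast; ring
    rw [h1, h2]
    have hk : (Nat.factorial (2*k) : ℝ) ≠ 0 := by positivity
    have hk2 : (Nat.factorial k : ℝ) ≠ 0 := by positivity
    push_cast
    field_simp
    ring



lemma exp_eq_tsum_real (t : ℝ) : Real.exp t = ∑' n : ℕ, t ^ n / (Nat.factorial n) := by
  rw [Real.exp_eq_exp_ℝ, NormedSpace.exp_eq_tsum_div]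

lemma exp_le_sum_add (x t : ℝ) (h : |t| ≤ x) (K : ℕ) :
    Real.exp t ≤ (∑ n ∈ range K, t^n / (Nat.factorial n))
      + (Real.exp x - ∑ n ∈ range K, x^n / (Nat.factorial n)) := by
  have hst : Summable (fun n : ℕ => t^n / (Nat.factorial n : ℝ)) :=
    Real.summable_pow_div_factorial t
  have hsx : Summable (fun n : ℕ => x^n / (Nat.factorial n : ℝ)) :=
    Real.summable_pow_div_factorial x
  have h1 : Real.exp t = (∑ n ∈ range K, t^n / (Nat.factorial n))
      + ∑' n : ℕ, t^(n+K) / (Nat.factorial (n+K)) := by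
    rw [exp_eq_tsum_real]
    exact (hst.sum_add_tsum_nat_add K).symm
  have h2 : Real.exp x = (∑ n ∈ range K, x^n / (Nat.factorial n))
      + ∑' n : ℕ, x^(n+K) / (Nat.factorial (n+K)) := by
    rw [exp_eq_tsum_real]
    exact (hsx.sum_add_tsum_nat_add K).symm
  have h3 : ∑' n : ℕ, t^(n+K) / (Nat.factorial (n+K))
      ≤ ∑' n : ℕ, x^(n+K) / (Nat.factorial (n+K)) := by
    refine Summable.tsum_le_tsum (fun n => ?_) ((summable_nat_add_iff (f := fun n : ℕ => t^n / (Nat.factorial n : ℝ)) K).mpr hst)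
      ((summable_nat_add_iff (f := fun n : ℕ => x^n / (Nat.factorial n : ℝ)) K).mpr hsx)
    have ht : t^(n+K) ≤ x^(n+K) := by
      calc t^(n+K) ≤ |t^(n+K)| := le_abs_self _
        _ = |t|^(n+K) := by rw [abs_pow]
        _ ≤ x^(n+K) := pow_le_pow_left₀ (abs_nonneg t) h _
    gcongr
  linarith

lemma sum_range_two_mul (N : ℕ) (f : ℕ → ℝ) :
    ∑ n ∈ range (2*N), f n = ∑ m ∈ range N, f (2*m) + ∑ m ∈ range N, f (2*m+1) := by
  induction N with
  | zero => simp
  | succ k ih =>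
    rw [show 2*(k+1) = (2*k+1)+1 from rfl, sum_range_succ, sum_range_succ,
      sum_range_succ (fun m => f (2*m)), sum_range_succ (fun m => f (2*m+1)), ih]
    ring




lemma I0_summable (x : ℝ) :
    Summable (fun m : ℕ => (1 / (Nat.factorial m : ℝ)^2) * (x/2)^(2*m)) := by
  apply Summable.of_nonneg_of_le (fun m => ?_) (fun m => ?_)
    (Real.summable_pow_div_factorial ((x/2)^2))
  · rw [pow_mul]; positivity
  · rw [pow_mul]
    have h1 : (1:ℝ) ≤ (Nat.factorial m : ℝ) := by
      exact_mod_cast Nat.one_le_iff_ne_zero.mpr (Nat.factorial_ne_zero m)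
    have h2 : (Nat.factorial m : ℝ) ≤ (Nat.factorial m : ℝ)^2 := by
      calc (Nat.factorial m : ℝ) = (Nat.factorial m) * 1 := (mul_one _).symm
        _ ≤ (Nat.factorial m : ℝ)^2 := by rw [sq]; gcongr
    rw [div_eq_mul_inv _ ((Nat.factorial m : ℝ)), mul_comm _ (((Nat.factorial m : ℝ))⁻¹), ← one_div]
    apply mul_le_mul_of_nonneg_right _ (by positivity : (0:ℝ) ≤ ((x/2)^2)^m)
    rw [div_le_div_iff₀ (by positivity) (by positivity)]
    nlinarith [h1]


lemma integral_exp_cos_le (x : ℝ) (hx : 0 ≤ x) :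
    ∫ θ in (0:ℝ)..π, Real.exp (x * Real.cos θ) ≤ π * I0 x := by
  have hsummI := I0_summable x
  have key : ∀ N : ℕ, (∫ θ in (0:ℝ)..π, Real.exp (x * Real.cos θ))
      ≤ π * I0 x + π * (Real.exp x - ∑ n ∈ range (2*N), x^n / (Nat.factorial n)) := by
    intro N
    set T : ℝ := Real.exp x - ∑ n ∈ range (2*N), x^n / (Nat.factorial n) with hT
    have hmono : (∫ θ in (0:ℝ)..π, Real.exp (x * Real.cos θ))
        ≤ ∫ θ in (0:ℝ)..π,
            ((∑ n ∈ range (2*N), (x * Real.cos θ)^n / (Nat.factorial n)) + T) := by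
      apply intervalIntegral.integral_mono_on Real.pi_pos.le
      · exact (Real.continuous_exp.comp
          (continuous_const.mul Real.continuous_cos)).intervalIntegrable 0 π
      · apply Continuous.intervalIntegrable
        fun_prop
      · intro θ _
        apply exp_le_sum_add
        rw [abs_mul, abs_of_nonneg hx]
        calc x * |Real.cos θ| ≤ x * 1 := by gcongr; exact Real.abs_cos_le_one θ
          _ = x := mul_one x
    have hsplit : (∫ θ in (0:ℝ)..π,
          ((∑ n ∈ range (2*N), (x * Real.cos θ)^n / (Nat.factorial n)) + T))
        = (∑ n ∈ range (2*N), (x^n / (Nat.factorial n))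
            * ∫ θ in (0:ℝ)..π, Real.cos θ ^ n) + π * T := by
      rw [intervalIntegral.integral_add ?_ (intervalIntegrable_const)]
      · rw [intervalIntegral.integral_const]
        congr 1
        · rw [intervalIntegral.integral_finset_sum]
          · apply Finset.sum_congr rfl
            intro n _
            rw [← intervalIntegral.integral_const_mul]
            apply intervalIntegral.integral_congr
            intro θ _
            show (x * Real.cos θ)^n / (Nat.factorial n) = x^n / (Nat.factorial n) * Real.cos θ ^ n
            rw [mul_pow]
            ring
          · intro n _
            apply Continuous.intervalIntegrable; fun_prop
        · rw [sub_zero, smul_eq_mul]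
      · apply Continuous.intervalIntegrable; fun_prop
    have heval : (∑ n ∈ range (2*N), (x^n / (Nat.factorial n))
            * ∫ θ in (0:ℝ)..π, Real.cos θ ^ n)
        = π * ∑ m ∈ range N, (1 / (Nat.factorial m : ℝ)^2) * (x/2)^(2*m) := by
      rw [sum_range_two_mul]
      have hodd : ∑ m ∈ range N, (x^(2*m+1) / (Nat.factorial (2*m+1)))
          * ∫ θ in (0:ℝ)..π, Real.cos θ ^ (2*m+1) = 0 := by
        apply Finset.sum_eq_zero
        intro m _
        rw [cos_int_odd]
        ring
      rw [hodd, add_zero, Finset.mul_sum]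
      apply Finset.sum_congr rfl
      intro m _
      rw [cos_int_even]
      have h4 : ((4:ℝ))^m ≠ 0 := by positivity
      have h2m : (Nat.factorial (2*m) : ℝ) ≠ 0 := by positivity
      have hm : (Nat.factorial m : ℝ) ≠ 0 := by positivity
      have h1 : (x/2)^(2*m) = x^(2*m) / 4^m := by
        rw [div_pow, pow_mul, pow_mul]
        norm_num
      rw [h1]
      field_simp
    have hpartial : ∑ m ∈ range N, (1 / (Nat.factorial m : ℝ)^2) * (x/2)^(2*m) ≤ I0 x := by
      apply Summable.sum_le_tsum (range N) (fun m _ => ?_) hsummI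
      rw [pow_mul]
      positivity
    calc (∫ θ in (0:ℝ)..π, Real.exp (x * Real.cos θ))
        ≤ (∑ n ∈ range (2*N), (x^n / (Nat.factorial n))
            * ∫ θ in (0:ℝ)..π, Real.cos θ ^ n) + π * T := by rw [← hsplit]; exact hmono
      _ = π * (∑ m ∈ range N, (1 / (Nat.factorial m : ℝ)^2) * (x/2)^(2*m)) + π * T := by
          rw [heval]
      _ ≤ π * I0 x + π * T := by
          have := mul_le_mul_of_nonneg_left hpartial Real.pi_pos.le
          linarith
  have hpart : Tendsto (fun K : ℕ => ∑ n ∈ range K, x^n / (Nat.factorial n : ℝ))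
      atTop (nhds (Real.exp x)) := by
    have h := (Real.summable_pow_div_factorial x).hasSum
    rw [← exp_eq_tsum_real] at h
    exact h.tendsto_sum_nat
  have h2N : Tendsto (fun N : ℕ => 2*N) atTop atTop :=
    tendsto_atTop_atTop_of_monotone (fun a b h => by omega) (fun b => ⟨b, by omega⟩)
  have hcomp := hpart.comp h2N
  have htail : Tendsto (fun N : ℕ => π * I0 x
      + π * (Real.exp x - ∑ n ∈ range (2*N), x^n / (Nat.factorial n))) atTop
      (nhds (π * I0 x)) := by
    have h1 : Tendsto (fun N : ℕ => Real.exp x - ∑ n ∈ range (2*N), x^n / (Nat.factorial n))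
        atTop (nhds 0) := by
      have := tendsto_const_nhds (x := Real.exp x) (f := atTop (α := ℕ)) |>.sub hcomp
      simpa using this
    have h2 := (tendsto_const_nhds (x := π * I0 x) (f := atTop (α := ℕ))).add
      (h1.const_mul π)
    simpa using h2
  exact ge_of_tendsto htail (Filter.Eventually.of_forall key)

lemma integral_exp_cos_ge (x : ℝ) (hx : 1 ≤ x) :
    Real.exp x * ((128/315) * Real.sqrt (8/x))
      ≤ ∫ θ in (0:ℝ)..π, Real.exp (x * Real.cos θ) := by
  have hx0 : (0:ℝ) < x := lt_of_lt_of_le one_pos hx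
  set δ := Real.sqrt (8/x) with hδ
  have hδ0 : 0 < δ := Real.sqrt_pos.mpr (by positivity)
  have hδ2 : δ^2 = 8/x := Real.sq_sqrt (by positivity)
  have hδπ : δ ≤ π := by
    have h8 : δ ≤ Real.sqrt 9 := Real.sqrt_le_sqrt (by rw [div_le_iff₀ hx0]; nlinarith)
    have h9 : Real.sqrt 9 = 3 := by
      rw [show (9:ℝ) = 3^2 by norm_num, Real.sqrt_sq (by norm_num : (0:ℝ) ≤ 3)]
    have := Real.pi_gt_three
    linarith [h8, h9 ▸ h8]
  have hcont : Continuous fun θ : ℝ => Real.exp (x * Real.cos θ) := by fun_prop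
  have hsplit : (∫ θ in (0:ℝ)..δ, Real.exp (x * Real.cos θ))
        + ∫ θ in δ..π, Real.exp (x * Real.cos θ)
      = ∫ θ in (0:ℝ)..π, Real.exp (x * Real.cos θ) :=
    integral_add_adjacent_intervals (hcont.intervalIntegrable _ _)
      (hcont.intervalIntegrable _ _)
  have h2 : 0 ≤ ∫ θ in δ..π, Real.exp (x * Real.cos θ) :=
    intervalIntegral.integral_nonneg hδπ (fun u _ => (Real.exp_pos _).le)
  have hpt : ∀ θ ∈ Set.Icc (0:ℝ) δ,
      Real.exp x * (1 - x*θ^2/8)^4 ≤ Real.exp (x * Real.cos θ) := by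
    intro θ hθ
    have hθ2 : x * θ^2 ≤ 8 := by
      have h := pow_le_pow_left₀ hθ.1 hθ.2 2
      rw [hδ2] at h
      rw [← le_div_iff₀' hx0]
      exact h
    have hb : (0:ℝ) ≤ 1 - x*θ^2/8 := by linarith
    have he1 : 1 - x*θ^2/8 ≤ Real.exp (-(x*θ^2/8)) := by
      have := Real.add_one_le_exp (-(x*θ^2/8))
      linarith
    have step1 : (1 - x*θ^2/8)^4 ≤ Real.exp (-(x*θ^2/2)) := by
      have h4 : (1 - x*θ^2/8)^4 ≤ (Real.exp (-(x*θ^2/8)))^4 :=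
        pow_le_pow_left₀ hb he1 4
      have h5 : (Real.exp (-(x*θ^2/8)))^4 = Real.exp (-(x*θ^2/2)) := by
        rw [← Real.exp_nat_mul]
        norm_num
        ring
      rwa [h5] at h4
    calc Real.exp x * (1 - x*θ^2/8)^4 ≤ Real.exp x * Real.exp (-(x*θ^2/2)) := by
          gcongr
      _ = Real.exp (x * (1 - θ^2/2)) := by rw [← Real.exp_add]; ring_nf
      _ ≤ Real.exp (x * Real.cos θ) := by
          apply Real.exp_le_exp.mpr
          exact mul_le_mul_of_nonneg_left (Real.one_sub_sq_div_two_le_cos) hx0.le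
  have hF : ∀ θ:ℝ, HasDerivAt
      (fun t => t - x/6*t^3 + 3*x^2/160*t^5 - x^3/896*t^7 + x^4/36864*t^9)
      ((1 - x*θ^2/8)^4) θ := by
    intro θ
    have h := (((((hasDerivAt_id θ).sub ((hasDerivAt_pow 3 θ).const_mul (x/6))).add
      ((hasDerivAt_pow 5 θ).const_mul (3*x^2/160))).sub
      ((hasDerivAt_pow 7 θ).const_mul (x^3/896))).add
      ((hasDerivAt_pow 9 θ).const_mul (x^4/36864)))
    refine h.congr_deriv ?_
    norm_num
    ring
  have hpoly : (∫ θ in (0:ℝ)..δ, (1 - x*θ^2/8)^4)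
      = δ - x/6*δ^3 + 3*x^2/160*δ^5 - x^3/896*δ^7 + x^4/36864*δ^9 := by
    rw [intervalIntegral.integral_eq_sub_of_hasDerivAt (fun θ _ => hF θ)
      ((by fun_prop : Continuous fun θ:ℝ => (1 - x*θ^2/8)^4).intervalIntegrable 0 δ)]
    norm_num
  have hval : δ - x/6*δ^3 + 3*x^2/160*δ^5 - x^3/896*δ^7 + x^4/36864*δ^9
      = 128/315*δ := by
    have h3 : δ^3 = (8/x) * δ := by
      rw [show (3:ℕ) = 2+1 from rfl, pow_succ, hδ2]
    have h5 : δ^5 = (8/x)^2 * δ := by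
      rw [show (5:ℕ) = 2*2+1 from rfl, pow_succ, pow_mul, hδ2]
    have h7 : δ^7 = (8/x)^3 * δ := by
      rw [show δ^7 = (δ^2)^3 * δ by ring, hδ2]
    have h9 : δ^9 = (8/x)^4 * δ := by
      rw [show δ^9 = (δ^2)^4 * δ by ring, hδ2]
    rw [h3, h5, h7, h9]
    field_simp
    ring
  have hI1 : ∫ θ in (0:ℝ)..δ, Real.exp x * (1 - x*θ^2/8)^4
      ≤ ∫ θ in (0:ℝ)..δ, Real.exp (x * Real.cos θ) := by
    exact intervalIntegral.integral_mono_on hδ0.le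
      (((by fun_prop : Continuous fun θ:ℝ =>
        Real.exp x * (1 - x*θ^2/8)^4)).intervalIntegrable 0 δ)
      (hcont.intervalIntegrable 0 δ) hpt
  have hI0' : ∫ θ in (0:ℝ)..δ, Real.exp x * (1 - x*θ^2/8)^4
      = Real.exp x * ((128/315) * δ) := by
    rw [intervalIntegral.integral_const_mul, hpoly, hval]
  rw [hI0'] at hI1
  linarith

/-- for every `x ≥ 1`, `I₀(x) > (4√2/(5π)) · eˣ / √x`. -/
theorem I0_lower_bound (x : ℝ) (hx : 1 ≤ x) :
    (4 * Real.sqrt 2 / (5 * Real.pi)) * Real.exp x / Real.sqrt x < I0 x := by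
  have hx0 : (0:ℝ) < x := lt_of_lt_of_le one_pos hx
  have h1 := integral_exp_cos_le x (by linarith)
  have h2 := integral_exp_cos_ge x hx
  have hπ : (0:ℝ) < π := Real.pi_pos
  have hsx : (0:ℝ) < Real.sqrt x := Real.sqrt_pos.mpr hx0
  have hs2 : (0:ℝ) < Real.sqrt 2 := Real.sqrt_pos.mpr (by norm_num)
  have hexp : (0:ℝ) < Real.exp x := Real.exp_pos x
  have hsq : Real.sqrt (8/x) = 2 * Real.sqrt 2 / Real.sqrt x := by
    rw [Real.sqrt_div (by norm_num : (0:ℝ) ≤ 8) x]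
    congr 1
    rw [show (8:ℝ) = 2^2 * 2 by norm_num, Real.sqrt_mul (by positivity) 2,
      Real.sqrt_sq (by norm_num : (0:ℝ) ≤ 2)]
  rw [hsq] at h2
  have key : Real.exp x * ((128:ℝ)/315 * (2 * Real.sqrt 2 / Real.sqrt x)) ≤ π * I0 x :=
    le_trans h2 h1
  have hlt : π * (4 * Real.sqrt 2 / (5 * π) * Real.exp x / Real.sqrt x)
      < Real.exp x * ((128:ℝ)/315 * (2 * Real.sqrt 2 / Real.sqrt x)) := by
    have e1 : π * (4 * Real.sqrt 2 / (5 * π) * Real.exp x / Real.sqrt x)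
        = (4/5) * (Real.sqrt 2 * Real.exp x / Real.sqrt x) := by
      field_simp
    have e2 : Real.exp x * ((128:ℝ)/315 * (2 * Real.sqrt 2 / Real.sqrt x))
        = (256/315) * (Real.sqrt 2 * Real.exp x / Real.sqrt x) := by
      field_simp
      ring
    rw [e1, e2]
    apply mul_lt_mul_of_pos_right (by norm_num : (4:ℝ)/5 < 256/315)
    positivity
  have := lt_of_lt_of_le hlt key
  exact lt_of_mul_lt_mul_left this hπ.le
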